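/- Let ω ≥ 3 be an integer and define u₊ : ℝ → ℝ as the 2π-periodic function with u₊(θ) = 1/2 − cos(ωθ) for |θ| ≤ π/ω, u₊(θ) = 3/2 for π/ω ≤ |θ| ≤ 2π/ω, and u₊(θ) = 1/2 + cos(ωθ) for 2π/ω ≤ |θ| ≤ π. Then u₊ is continuously differentiable on ℝ, piecewise twice continuously differentiable, satisfies u₊''(θ) + ω²u₊(θ) > 0 on every open interval where it is twice differentiable, and u₊(0) < 0 and u₊(3π/ω) < 0. -/

import Mathlib

/-- The `2π`-periodic piecewise function of Proposition 2: on the fundamental domain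
(obtained by reducing `θ` modulo `2π` to `[-π, π]` and setting `t = |θ_reduced|`) it equals
`1/2 − cos(ωθ)` for `t ≤ π/ω`, `3/2` for `π/ω ≤ t ≤ 2π/ω`, and `1/2 + cos(ωθ)` for
`2π/ω ≤ t ≤ π`. (Since `ω` is an integer and `cos` is even, `cos (ω t) = cos (ω θ)`.) -/
noncomputable def uStarPiece (ω : ℕ) (θ : ℝ) : ℝ :=
  let t : ℝ := |θ - 2 * Real.pi * round (θ / (2 * Real.pi))|
  if t ≤ Real.pi / ω then 1 / 2 - Real.cos (ω * t)
  else if t ≤ 2 * Real.pi / ω then 3 / 2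
  else 1 / 2 + Real.cos (ω * t)

/-- The set of gluing points, i.e. the points congruent modulo `2π` to `±π/ω`, `±2π/ω`
or `π`, where the pieces of `uStarPiece ω` are joined. -/
def gluingSet (ω : ℕ) : Set ℝ :=
  {θ : ℝ | ∃ k : ℤ, |θ - 2 * Real.pi * k| = Real.pi / ω ∨
    |θ - 2 * Real.pi * k| = 2 * Real.pi / ω ∨ θ = 2 * Real.pi * k + Real.pi}

open Real Filter Set Topology

namespace UStarAux

lemma uStar_def (ω : ℕ) (θ : ℝ) : uStarPiece ω θ =
    (if |θ - 2 * Real.pi * round (θ / (2 * Real.pi))| ≤ Real.pi / ω then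
      1 / 2 - Real.cos (ω * |θ - 2 * Real.pi * round (θ / (2 * Real.pi))|)
    else if |θ - 2 * Real.pi * round (θ / (2 * Real.pi))| ≤ 2 * Real.pi / ω then 3 / 2
    else 1 / 2 + Real.cos (ω * |θ - 2 * Real.pi * round (θ / (2 * Real.pi))|)) := rfl

variable {ω : ℕ}

lemma cos_omega_abs (x : ℝ) : Real.cos (ω * |x|) = Real.cos (ω * x) := by
  rw [show (ω:ℝ) * |x| = |(ω:ℝ) * x| by
    rw [abs_mul, abs_of_nonneg (by positivity : (0:ℝ) ≤ (ω:ℝ))], Real.cos_abs]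

lemma cos_omega_shift (k : ℤ) (x : ℝ) :
    Real.cos ((ω : ℝ) * (x - 2 * Real.pi * k)) = Real.cos (ω * x) := by
  have h : (ω:ℝ) * (x - 2 * Real.pi * k) = ω * x - (ω * k : ℤ) * (2 * Real.pi) := by
    push_cast; ring
  rw [h, Real.cos_sub_int_mul_two_pi]

lemma cos_omega_add (k : ℤ) (x : ℝ) :
    Real.cos ((ω : ℝ) * (2 * Real.pi * k + x)) = Real.cos (ω * x) := by
  have h : (ω:ℝ) * (2 * Real.pi * k + x) = ω * x + (ω * k : ℤ) * (2 * Real.pi) := by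
    push_cast; ring
  rw [h, Real.cos_add_int_mul_two_pi]

lemma sin_omega_add (k : ℤ) (x : ℝ) :
    Real.sin ((ω : ℝ) * (2 * Real.pi * k + x)) = Real.sin (ω * x) := by
  have h : (ω:ℝ) * (2 * Real.pi * k + x) = ω * x + (ω * k : ℤ) * (2 * Real.pi) := by
    push_cast; ring
  rw [h, Real.sin_add_int_mul_two_pi]

lemma uval (k : ℤ) {θ : ℝ} (hk : round (θ / (2 * Real.pi)) = k) :
    uStarPiece ω θ =
      if |θ - 2 * Real.pi * k| ≤ Real.pi / ω then 1 / 2 - Real.cos (ω * θ)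
      else if |θ - 2 * Real.pi * k| ≤ 2 * Real.pi / ω then 3 / 2
      else 1 / 2 + Real.cos (ω * θ) := by
  rw [uStar_def, hk, cos_omega_abs (θ - 2 * Real.pi * k), cos_omega_shift k θ]

lemma round_eq_of (k : ℤ) {θ : ℝ} (h1 : -Real.pi ≤ θ - 2 * Real.pi * k)
    (h2 : θ - 2 * Real.pi * k < Real.pi) : round (θ / (2 * Real.pi)) = k := by
  have hπ := Real.pi_pos
  have key : θ / (2 * Real.pi) + 1 / 2 = (θ - 2 * Real.pi * k + Real.pi) / (2 * Real.pi) + k := by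
    field_simp; ring
  rw [round_eq, key, Int.floor_add_intCast, Int.floor_eq_zero_iff.2, zero_add]
  exact ⟨div_nonneg (by linarith) (by linarith), (div_lt_one (by linarith)).2 (by linarith)⟩

lemma uval_all (hω : 3 ≤ ω) (k : ℤ) {θ : ℝ} (h1 : -Real.pi ≤ θ - 2 * Real.pi * k)
    (h2 : θ - 2 * Real.pi * k ≤ Real.pi) :
    uStarPiece ω θ =
      if |θ - 2 * Real.pi * k| ≤ Real.pi / ω then 1 / 2 - Real.cos (ω * θ)
      else if |θ - 2 * Real.pi * k| ≤ 2 * Real.pi / ω then 3 / 2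
      else 1 / 2 + Real.cos (ω * θ) := by
  have hπ := Real.pi_pos
  have hω3 : (3:ℝ) ≤ ω := by exact_mod_cast hω
  rcases lt_or_eq_of_le h2 with h2' | h2'
  · exact uval k (round_eq_of k h1 h2')
  · have hr : round (θ / (2 * Real.pi)) = k + 1 := by
      apply round_eq_of (k + 1) <;> push_cast <;> linarith
    rw [uval (k + 1) hr]
    have e1 : |θ - 2 * Real.pi * ((k : ℝ) + 1)| = Real.pi := by
      rw [abs_eq hπ.le]; right; linarith
    have e2 : |θ - 2 * Real.pi * (k : ℝ)| = Real.pi := by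
      rw [abs_eq hπ.le]; left; linarith
    have ha : ¬ (Real.pi ≤ Real.pi / ω) := by
      rw [not_le, div_lt_iff₀ (by linarith)]; nlinarith
    have hb : ¬ (Real.pi ≤ 2 * Real.pi / ω) := by
      rw [not_le, div_lt_iff₀ (by linarith)]; nlinarith
    push_cast
    rw [e1, e2, if_neg ha]

noncomputable def fA (ω : ℕ) (θ : ℝ) : ℝ := 1 / 2 - Real.cos (ω * θ)
noncomputable def fC (ω : ℕ) (θ : ℝ) : ℝ := 1 / 2 + Real.cos (ω * θ)

lemma contDiff_fA : ContDiff ℝ 2 (fA ω) :=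
  contDiff_const.sub (Real.contDiff_cos.comp (contDiff_const.mul contDiff_id))

lemma contDiff_fC : ContDiff ℝ 2 (fC ω) :=
  contDiff_const.add (Real.contDiff_cos.comp (contDiff_const.mul contDiff_id))

lemma hasDerivAt_cos_omega (x : ℝ) :
    HasDerivAt (fun y : ℝ => Real.cos ((ω : ℝ) * y)) (-Real.sin ((ω : ℝ) * x) * ω) x :=
  (Real.hasDerivAt_cos _).comp x (by simpa using (hasDerivAt_id x).const_mul (ω : ℝ))

lemma hasDerivAt_fA (x : ℝ) :
    HasDerivAt (fA ω) ((ω : ℝ) * Real.sin ((ω : ℝ) * x)) x := by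
  have h2 := (hasDerivAt_cos_omega (ω := ω) x).const_sub (1 / 2 : ℝ)
  exact h2.congr_deriv (by ring)

lemma hasDerivAt_fC (x : ℝ) :
    HasDerivAt (fC ω) (-((ω : ℝ) * Real.sin ((ω : ℝ) * x))) x := by
  have h2 := (hasDerivAt_cos_omega (ω := ω) x).const_add (1 / 2 : ℝ)
  exact h2.congr_deriv (by ring)

lemma hasDerivAt_sinterm (x : ℝ) :
    HasDerivAt (fun y : ℝ => (ω : ℝ) * Real.sin ((ω : ℝ) * y)) ((ω : ℝ) ^ 2 * Real.cos ((ω : ℝ) * x)) x := by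
  have h : HasDerivAt (fun y : ℝ => Real.sin ((ω : ℝ) * y)) (Real.cos ((ω : ℝ) * x) * ω) x :=
    (Real.hasDerivAt_sin _).comp x (by simpa using (hasDerivAt_id x).const_mul (ω : ℝ))
  have h2 := h.const_mul (ω : ℝ)
  exact h2.congr_deriv (by ring)

lemma deriv_fA : deriv (fA ω) = fun x => (ω : ℝ) * Real.sin ((ω : ℝ) * x) :=
  deriv_eq fun x => hasDerivAt_fA x

lemma deriv_fC : deriv (fC ω) = fun x => -((ω : ℝ) * Real.sin ((ω : ℝ) * x)) :=
  deriv_eq fun x => hasDerivAt_fC x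

lemma deriv2_fA (x : ℝ) : deriv (deriv (fA ω)) x = (ω : ℝ) ^ 2 * Real.cos ((ω : ℝ) * x) := by
  rw [deriv_fA]; exact (hasDerivAt_sinterm x).deriv

lemma deriv2_fC (x : ℝ) : deriv (deriv (fC ω)) x = -((ω : ℝ) ^ 2 * Real.cos ((ω : ℝ) * x)) := by
  rw [deriv_fC]
  exact ((hasDerivAt_sinterm (ω := ω) x).neg).deriv

lemma eq_fA_nhds (hω : 3 ≤ ω) (k : ℤ) {θ : ℝ} (h : |θ - 2 * Real.pi * k| < Real.pi / ω) :
    uStarPiece ω =ᶠ[𝓝 θ] fA ω := by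
  have hπ := Real.pi_pos
  have hω3 : (3:ℝ) ≤ ω := by exact_mod_cast hω
  have haπ : Real.pi / ω < Real.pi := by rw [div_lt_iff₀ (by linarith)]; nlinarith
  have hcont : Continuous fun θ' : ℝ => |θ' - 2 * Real.pi * k| :=
    (continuous_id.sub continuous_const).abs
  have hopen : IsOpen {θ' : ℝ | |θ' - 2 * Real.pi * k| < Real.pi / ω} :=
    isOpen_lt hcont continuous_const
  filter_upwards [hopen.mem_nhds h] with θ' h'
  have h' : |θ' - 2 * Real.pi * k| < Real.pi / ω := h'
  have h1 := (abs_lt.1 h').1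
  have h2 := (abs_lt.1 h').2
  rw [uval_all hω k (by linarith) (by linarith), if_pos h'.le]
  rfl

lemma eq_fB_nhds (hω : 3 ≤ ω) (k : ℤ) {θ : ℝ} (ha : Real.pi / ω < |θ - 2 * Real.pi * k|)
    (hb : |θ - 2 * Real.pi * k| < 2 * Real.pi / ω) :
    uStarPiece ω =ᶠ[𝓝 θ] fun _ => (3 / 2 : ℝ) := by
  have hπ := Real.pi_pos
  have hω3 : (3:ℝ) ≤ ω := by exact_mod_cast hω
  have hbπ : 2 * Real.pi / ω < Real.pi := by rw [div_lt_iff₀ (by linarith)]; nlinarith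
  have hcont : Continuous fun θ' : ℝ => |θ' - 2 * Real.pi * k| :=
    (continuous_id.sub continuous_const).abs
  have hopen : IsOpen ({θ' : ℝ | Real.pi / ω < |θ' - 2 * Real.pi * k|} ∩ {θ' : ℝ | |θ' - 2 * Real.pi * k| < 2 * Real.pi / ω}) :=
    (isOpen_lt continuous_const hcont).inter (isOpen_lt hcont continuous_const)
  filter_upwards [hopen.mem_nhds ⟨ha, hb⟩] with θ' h'
  obtain ⟨h'a, h'b⟩ := h'
  have h'a : Real.pi / ω < |θ' - 2 * Real.pi * k| := h'a
  have h'b : |θ' - 2 * Real.pi * k| < 2 * Real.pi / ω := h'b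
  have h1 := (abs_lt.1 (h'b.trans hbπ)).1
  have h2 := (abs_lt.1 (h'b.trans hbπ)).2
  rw [uval_all hω k (by linarith) (by linarith), if_neg (not_le.2 h'a), if_pos h'b.le]

lemma eq_fC_nhds (hω : 3 ≤ ω) (k : ℤ) {θ : ℝ} (hb : 2 * Real.pi / ω < |θ - 2 * Real.pi * k|)
    (hπ' : |θ - 2 * Real.pi * k| < Real.pi) :
    uStarPiece ω =ᶠ[𝓝 θ] fC ω := by
  have hπ := Real.pi_pos
  have hω3 : (3:ℝ) ≤ ω := by exact_mod_cast hω
  have hab : Real.pi / ω < 2 * Real.pi / ω := by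
    rw [div_lt_div_iff_of_pos_right (by linarith)]; linarith
  have hcont : Continuous fun θ' : ℝ => |θ' - 2 * Real.pi * k| :=
    (continuous_id.sub continuous_const).abs
  have hopen : IsOpen ({θ' : ℝ | 2 * Real.pi / ω < |θ' - 2 * Real.pi * k|} ∩ {θ' : ℝ | |θ' - 2 * Real.pi * k| < Real.pi}) :=
    (isOpen_lt continuous_const hcont).inter (isOpen_lt hcont continuous_const)
  filter_upwards [hopen.mem_nhds ⟨hb, hπ'⟩] with θ' h'
  obtain ⟨h'b, h'π⟩ := h'
  have h'b : 2 * Real.pi / ω < |θ' - 2 * Real.pi * k| := h'b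
  have h'π : |θ' - 2 * Real.pi * k| < Real.pi := h'π
  have h1 := (abs_lt.1 h'π).1
  have h2 := (abs_lt.1 h'π).2
  rw [uval_all hω k (by linarith) (by linarith), if_neg (by push_neg; linarith),
    if_neg (not_le.2 h'b)]
  rfl

lemma eq_fC_nhds_pi (hω : 3 ≤ ω) (k : ℤ) {θ : ℝ} (hθ : θ = 2 * Real.pi * k + Real.pi) :
    uStarPiece ω =ᶠ[𝓝 θ] fC ω := by
  have hπ := Real.pi_pos
  have hω3 : (3:ℝ) ≤ ω := by exact_mod_cast hω
  have hω0 : (0:ℝ) < ω := by linarith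
  have hbπ : 2 * Real.pi / ω < Real.pi := by rw [div_lt_iff₀ hω0]; nlinarith
  have hab : Real.pi / ω < 2 * Real.pi / ω := by
    rw [div_lt_div_iff_of_pos_right hω0]; linarith
  have hb0 : 0 < 2 * Real.pi / ω := by positivity
  have hcont : Continuous fun θ' : ℝ => |θ' - 2 * Real.pi * k| :=
    (continuous_id.sub continuous_const).abs
  have hopen : IsOpen ({θ' : ℝ | 2 * Real.pi / ω < |θ' - 2 * Real.pi * k|} ∩
      {θ' : ℝ | |θ' - 2 * Real.pi * k| < 2 * Real.pi - 2 * Real.pi / ω}) :=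
    (isOpen_lt continuous_const hcont).inter (isOpen_lt hcont continuous_const)
  have hmem : θ ∈ ({θ' : ℝ | 2 * Real.pi / ω < |θ' - 2 * Real.pi * k|} ∩
      {θ' : ℝ | |θ' - 2 * Real.pi * k| < 2 * Real.pi - 2 * Real.pi / ω}) := by
    have : θ - 2 * Real.pi * k = Real.pi := by rw [hθ]; ring
    constructor <;> simp only [Set.mem_setOf_eq, this, abs_of_pos hπ] <;> linarith
  filter_upwards [hopen.mem_nhds hmem] with θ' h'
  obtain ⟨h'b, h'r⟩ := h'
  have h'b : 2 * Real.pi / ω < |θ' - 2 * Real.pi * k| := h'b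
  have h'r : |θ' - 2 * Real.pi * k| < 2 * Real.pi - 2 * Real.pi / ω := h'r
  rcases le_or_gt (|θ' - 2 * Real.pi * k|) Real.pi with hs | hs
  · have h1 := (abs_le.1 hs).1
    have h2 := (abs_le.1 hs).2
    rw [uval_all hω k (by linarith) (by linarith), if_neg (by push_neg; linarith),
      if_neg (not_le.2 h'b)]
    rfl
  · rcases le_or_gt (θ' - 2 * Real.pi * k) 0 with hsgn | hsgn
    · have habs : |θ' - 2 * Real.pi * (k:ℝ)| = -(θ' - 2 * Real.pi * k) := abs_of_nonpos hsgn
      rw [habs] at hs h'r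
      have e1 : θ' - 2 * Real.pi * (((k:ℤ) - 1 : ℤ) : ℝ) = θ' - 2 * Real.pi * k + 2 * Real.pi := by
        push_cast; ring
      have hval : |θ' - 2 * Real.pi * (((k:ℤ) - 1 : ℤ) : ℝ)| = θ' - 2 * Real.pi * k + 2 * Real.pi := by
        rw [e1, abs_of_pos (by linarith)]
      rw [uval_all hω (k - 1) (by rw [e1]; linarith) (by rw [e1]; linarith), hval,
        if_neg (by push_neg; linarith), if_neg (by push_neg; linarith)]
      rfl
    · have habs : |θ' - 2 * Real.pi * (k:ℝ)| = θ' - 2 * Real.pi * k := abs_of_pos hsgn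
      rw [habs] at hs h'r
      have e1 : θ' - 2 * Real.pi * (((k:ℤ) + 1 : ℤ) : ℝ) = θ' - 2 * Real.pi * k - 2 * Real.pi := by
        push_cast; ring
      have hval : |θ' - 2 * Real.pi * (((k:ℤ) + 1 : ℤ) : ℝ)| = -(θ' - 2 * Real.pi * k - 2 * Real.pi) := by
        rw [e1]; exact abs_of_nonpos (by linarith)
      rw [uval_all hω (k + 1) (by rw [e1]; linarith) (by rw [e1]; linarith), hval,
        if_neg (by push_neg; linarith), if_neg (by push_neg; linarith)]
      rfl

lemma smooth_pack {u f : ℝ → ℝ} {θ : ℝ} (hf : ContDiff ℝ 2 f) (hev : u =ᶠ[𝓝 θ] f) :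
    DifferentiableAt ℝ u θ ∧ ContinuousAt (deriv u) θ := by
  refine ⟨hev.differentiableAt_iff.2 (hf.differentiable (by norm_num)).differentiableAt, ?_⟩
  exact ((hf.continuous_deriv (by norm_num)).continuousAt).congr hev.deriv.symm

lemma c1_glue {u f g : ℝ → ℝ} {p ε : ℝ} (hε : 0 < ε)
    (hf : ContDiff ℝ 2 f) (hg : ContDiff ℝ 2 g)
    (h1 : ∀ θ' ∈ Ioo (p - ε) p, u =ᶠ[𝓝 θ'] f)
    (h2 : ∀ θ' ∈ Ioo p (p + ε), u =ᶠ[𝓝 θ'] g)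
    (hup : u p = f p) (hfg : f p = g p) (hder : deriv f p = deriv g p) :
    DifferentiableAt ℝ u p ∧ ContinuousAt (deriv u) p := by
  have hIoo : Ioo (p - ε) (p + ε) ∈ 𝓝 p := Ioo_mem_nhds (by linarith) (by linarith)
  have evL : u =ᶠ[𝓝[Iic p] p] f := by
    filter_upwards [nhdsWithin_le_nhds hIoo, self_mem_nhdsWithin] with x hx hxle
    have hxle' : x ≤ p := hxle
    rcases eq_or_lt_of_le hxle' with h | h
    · rw [h, hup]
    · exact (h1 x ⟨hx.1, h⟩).eq_of_nhds
  have evR : u =ᶠ[𝓝[Ici p] p] g := by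
    filter_upwards [nhdsWithin_le_nhds hIoo, self_mem_nhdsWithin] with x hx hxge
    have hxge' : p ≤ x := hxge
    rcases eq_or_lt_of_le hxge' with h | h
    · rw [← h, hup, hfg]
    · exact (h2 x ⟨h, hx.2⟩).eq_of_nhds
  have HL : HasDerivWithinAt u (deriv f p) (Iic p) p :=
    ((hf.differentiable (by norm_num)).differentiableAt.hasDerivAt.hasDerivWithinAt).congr_of_eventuallyEq
      evL hup
  have HR : HasDerivWithinAt u (deriv f p) (Ici p) p := by
    rw [hder]
    exact ((hg.differentiable (by norm_num)).differentiableAt.hasDerivAt.hasDerivWithinAt).congr_of_eventuallyEq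
      evR (hup.trans hfg)
  have HU : HasDerivAt u (deriv f p) p := by
    have := HL.union HR
    rwa [Iic_union_Ici, hasDerivWithinAt_univ] at this
  refine ⟨HU.differentiableAt, ?_⟩
  have dL : deriv u =ᶠ[𝓝[Iic p] p] deriv f := by
    filter_upwards [nhdsWithin_le_nhds hIoo, self_mem_nhdsWithin] with x hx hxle
    have hxle' : x ≤ p := hxle
    rcases eq_or_lt_of_le hxle' with h | h
    · rw [h, HU.deriv]
    · exact (h1 x ⟨hx.1, h⟩).deriv_eq
  have dR : deriv u =ᶠ[𝓝[Ici p] p] deriv g := by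
    filter_upwards [nhdsWithin_le_nhds hIoo, self_mem_nhdsWithin] with x hx hxge
    have hxge' : p ≤ x := hxge
    rcases eq_or_lt_of_le hxge' with h | h
    · rw [← h, HU.deriv, hder]
    · exact (h2 x ⟨h, hx.2⟩).deriv_eq
  have cL : ContinuousWithinAt (deriv u) (Iic p) p :=
    ((hf.continuous_deriv (by norm_num)).continuousWithinAt).congr_of_eventuallyEq dL HU.deriv
  have cR : ContinuousWithinAt (deriv u) (Ici p) p :=
    ((hg.continuous_deriv (by norm_num)).continuousWithinAt).congr_of_eventuallyEq dR
      (HU.deriv.trans hder)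
  have := cL.union cR
  rwa [Iic_union_Ici, continuousWithinAt_univ] at this

lemma classify (hω : 3 ≤ ω) (θ : ℝ) : ∃ k : ℤ,
    |θ - 2 * Real.pi * k| < Real.pi / ω ∨
    (Real.pi / ω < |θ - 2 * Real.pi * k| ∧ |θ - 2 * Real.pi * k| < 2 * Real.pi / ω) ∨
    (2 * Real.pi / ω < |θ - 2 * Real.pi * k| ∧ |θ - 2 * Real.pi * k| < Real.pi) ∨
    |θ - 2 * Real.pi * k| = Real.pi / ω ∨ |θ - 2 * Real.pi * k| = 2 * Real.pi / ω ∨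
    θ = 2 * Real.pi * k + Real.pi := by
  have hπ := Real.pi_pos
  set k := round (θ / (2 * Real.pi)) with hk
  have hhalf : |θ / (2 * Real.pi) - k| ≤ 1 / 2 := abs_sub_round _
  have hsplit : θ - 2 * Real.pi * k = 2 * Real.pi * (θ / (2 * Real.pi) - k) := by
    field_simp
  have ht : |θ - 2 * Real.pi * k| ≤ Real.pi := by
    rw [hsplit, abs_mul, abs_of_pos (by linarith : (0:ℝ) < 2 * Real.pi)]
    nlinarith [abs_nonneg (θ / (2 * Real.pi) - (k:ℝ))]
  rcases eq_or_lt_of_le ht with hteq | htlt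
  · rcases (abs_eq hπ.le).1 hteq with h | h
    · exact ⟨k, Or.inr (Or.inr (Or.inr (Or.inr (Or.inr (by linarith)))))⟩
    · refine ⟨k - 1, Or.inr (Or.inr (Or.inr (Or.inr (Or.inr ?_))))⟩
      push_cast
      linarith
  · rcases lt_trichotomy (|θ - 2 * Real.pi * k|) (Real.pi / ω) with h | h | h
    · exact ⟨k, Or.inl h⟩
    · exact ⟨k, Or.inr (Or.inr (Or.inr (Or.inl h)))⟩
    · rcases lt_trichotomy (|θ - 2 * Real.pi * k|) (2 * Real.pi / ω) with h2 | h2 | h2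
      · exact ⟨k, Or.inr (Or.inl ⟨h, h2⟩)⟩
      · exact ⟨k, Or.inr (Or.inr (Or.inr (Or.inr (Or.inl h2))))⟩
      · exact ⟨k, Or.inr (Or.inr (Or.inl ⟨h2, htlt⟩))⟩

lemma pack (hω : 3 ≤ ω) (θ : ℝ) :
    DifferentiableAt ℝ (uStarPiece ω) θ ∧ ContinuousAt (deriv (uStarPiece ω)) θ := by
  have hπ := Real.pi_pos
  have hω3 : (3:ℝ) ≤ ω := by exact_mod_cast hω
  have hω0 : (0:ℝ) < ω := by linarith
  have ha0 : 0 < Real.pi / ω := by positivity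
  have hab : Real.pi / ω < 2 * Real.pi / ω := by
    rw [div_lt_div_iff_of_pos_right hω0]; linarith
  have hbπ : 2 * Real.pi / ω < Real.pi := by rw [div_lt_iff₀ hω0]; nlinarith
  have h2a : Real.pi / ω + Real.pi / ω = 2 * Real.pi / ω := by ring
  have h3a : 2 * Real.pi / ω + Real.pi / ω ≤ Real.pi := by
    rw [← add_div, div_le_iff₀ hω0]; nlinarith
  have hωa : (ω:ℝ) * (Real.pi / ω) = Real.pi := by field_simp
  have hωb : (ω:ℝ) * (2 * Real.pi / ω) = 2 * Real.pi := by field_simp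
  obtain ⟨k, hcase⟩ := classify hω θ
  rcases hcase with h | ⟨h1, h2⟩ | ⟨h1, h2⟩ | h | h | h
  · exact smooth_pack contDiff_fA (eq_fA_nhds hω k h)
  · exact smooth_pack contDiff_const (eq_fB_nhds hω k h1 h2)
  · exact smooth_pack contDiff_fC (eq_fC_nhds hω k h1 h2)
  · -- |θ - 2πk| = π/ω
    rcases (abs_eq ha0.le).1 h with h' | h'
    · -- θ = 2πk + π/ω : fA on the left, 3/2 on the right
      have hθ : θ = 2 * Real.pi * (k:ℝ) + Real.pi / ω := by linarith
      have hcos : Real.cos ((ω:ℝ) * θ) = -1 := by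
        rw [hθ, cos_omega_add, hωa, Real.cos_pi]
      have hsin : Real.sin ((ω:ℝ) * θ) = 0 := by
        rw [hθ, sin_omega_add, hωa, Real.sin_pi]
      apply c1_glue ha0 contDiff_fA contDiff_const
      · intro x hx
        exact eq_fA_nhds hω k (by rw [abs_lt]; exact ⟨by linarith [hx.1], by linarith [hx.2]⟩)
      · intro x hx
        have habs : |x - 2 * Real.pi * (k:ℝ)| = x - 2 * Real.pi * k :=
          abs_of_pos (by linarith [hx.1])
        exact eq_fB_nhds hω k (by rw [habs]; linarith [hx.1])
          (by rw [habs]; linarith [hx.2])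
      · rw [uval_all hω k (by linarith) (by linarith), h, if_pos le_rfl]; rfl
      · show fA ω θ = 3 / 2
        rw [fA, hcos]; norm_num
      · rw [deriv_fA]; simp [hsin]
    · -- θ = 2πk - π/ω : 3/2 on the left, fA on the right
      have hθ : θ = 2 * Real.pi * (k:ℝ) + -(Real.pi / ω) := by linarith
      have hcos : Real.cos ((ω:ℝ) * θ) = -1 := by
        rw [hθ, cos_omega_add, mul_neg, Real.cos_neg, hωa, Real.cos_pi]
      have hsin : Real.sin ((ω:ℝ) * θ) = 0 := by
        rw [hθ, sin_omega_add, mul_neg, Real.sin_neg, hωa, Real.sin_pi]; ring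
      apply c1_glue ha0 contDiff_const contDiff_fA
      · intro x hx
        have habs : |x - 2 * Real.pi * (k:ℝ)| = -(x - 2 * Real.pi * k) :=
          abs_of_neg (by linarith [hx.2])
        exact eq_fB_nhds hω k (by rw [habs]; linarith [hx.2])
          (by rw [habs]; linarith [hx.1])
      · intro x hx
        exact eq_fA_nhds hω k (by rw [abs_lt]; exact ⟨by linarith [hx.1], by linarith [hx.2]⟩)
      · rw [uval_all hω k (by linarith) (by linarith), h, if_pos le_rfl]
        show 1 / 2 - Real.cos ((ω:ℝ) * θ) = 3 / 2
        rw [hcos]; norm_num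
      · show (3 / 2 : ℝ) = fA ω θ
        rw [fA, hcos]; norm_num
      · rw [deriv_fA]; simp [hsin]
  · -- |θ - 2πk| = 2π/ω
    rcases (abs_eq (by positivity : (0:ℝ) ≤ 2 * Real.pi / ω)).1 h with h' | h'
    · -- θ = 2πk + 2π/ω : 3/2 on the left, fC on the right
      have hθ : θ = 2 * Real.pi * (k:ℝ) + 2 * Real.pi / ω := by linarith
      have hcos : Real.cos ((ω:ℝ) * θ) = 1 := by
        rw [hθ, cos_omega_add, hωb, Real.cos_two_pi]
      have hsin : Real.sin ((ω:ℝ) * θ) = 0 := by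
        rw [hθ, sin_omega_add, hωb, Real.sin_two_pi]
      apply c1_glue ha0 contDiff_const contDiff_fC
      · intro x hx
        have habs : |x - 2 * Real.pi * (k:ℝ)| = x - 2 * Real.pi * k :=
          abs_of_pos (by linarith [hx.1])
        exact eq_fB_nhds hω k (by rw [habs]; linarith [hx.1])
          (by rw [habs]; linarith [hx.2])
      · intro x hx
        have habs : |x - 2 * Real.pi * (k:ℝ)| = x - 2 * Real.pi * k :=
          abs_of_pos (by linarith [hx.1])
        exact eq_fC_nhds hω k (by rw [habs]; linarith [hx.1])
          (by rw [habs]; linarith [hx.2, h3a])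
      · rw [uval_all hω k (by linarith) (by linarith), h, if_neg (not_le.2 hab),
          if_pos le_rfl]
      · show (3 / 2 : ℝ) = fC ω θ
        rw [fC, hcos]; norm_num
      · rw [deriv_fC]; simp [hsin]
    · -- θ = 2πk - 2π/ω : fC on the left, 3/2 on the right
      have hθ : θ = 2 * Real.pi * (k:ℝ) + -(2 * Real.pi / ω) := by linarith
      have hcos : Real.cos ((ω:ℝ) * θ) = 1 := by
        rw [hθ, cos_omega_add, mul_neg, Real.cos_neg, hωb, Real.cos_two_pi]
      have hsin : Real.sin ((ω:ℝ) * θ) = 0 := by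
        rw [hθ, sin_omega_add, mul_neg, Real.sin_neg, hωb, Real.sin_two_pi]; ring
      apply c1_glue ha0 contDiff_fC contDiff_const
      · intro x hx
        have habs : |x - 2 * Real.pi * (k:ℝ)| = -(x - 2 * Real.pi * k) :=
          abs_of_neg (by linarith [hx.2])
        exact eq_fC_nhds hω k (by rw [habs]; linarith [hx.2])
          (by rw [habs]; linarith [hx.1, h3a])
      · intro x hx
        have habs : |x - 2 * Real.pi * (k:ℝ)| = -(x - 2 * Real.pi * k) :=
          abs_of_neg (by linarith [hx.2])
        exact eq_fB_nhds hω k (by rw [habs]; linarith [hx.2])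
          (by rw [habs]; linarith [hx.1])
      · rw [uval_all hω k (by linarith) (by linarith), h, if_neg (not_le.2 hab),
          if_pos le_rfl]
        show (3 / 2 : ℝ) = fC ω θ
        rw [fC, hcos]; norm_num
      · show fC ω θ = 3 / 2
        rw [fC, hcos]; norm_num
      · rw [deriv_fC]; simp [hsin]
  · exact smooth_pack contDiff_fC (eq_fC_nhds_pi hω k h)

lemma uStar_periodic : Function.Periodic (uStarPiece ω) (2 * Real.pi) := by
  intro θ
  have hπ := Real.pi_pos
  have hr : round ((θ + 2 * Real.pi) / (2 * Real.pi)) = round (θ / (2 * Real.pi)) + 1 := by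
    rw [show (θ + 2 * Real.pi) / (2 * Real.pi) = θ / (2 * Real.pi) + 1 by field_simp,
      round_add_one]
  have harg : θ + 2 * Real.pi - 2 * Real.pi * ((round (θ / (2 * Real.pi)) : ℝ) + 1) =
      θ - 2 * Real.pi * (round (θ / (2 * Real.pi)) : ℝ) := by ring
  rw [uStar_def, uStar_def, hr]
  push_cast
  rw [harg]

lemma region_part {θ : ℝ} {f : ℝ → ℝ} (hf : ContDiff ℝ 2 f)
    (hev : uStarPiece ω =ᶠ[𝓝 θ] f) :
    ContDiffAt ℝ 2 (uStarPiece ω) θ ∧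
      deriv (deriv (uStarPiece ω)) θ = deriv (deriv f) θ ∧ uStarPiece ω θ = f θ :=
  ⟨hf.contDiffAt.congr_of_eventuallyEq hev, hev.deriv.deriv_eq, hev.eq_of_nhds⟩

end UStarAux

open UStarAux in
set_option maxHeartbeats 1000000 in
/-- For every integer `ω ≥ 3`, the `2π`-periodic piecewise function
`uStarPiece ω` is continuously differentiable, is twice continuously differentiable away
from the gluing points with `u'' + ω²u > 0` there, and is negative at `0` and at `3π/ω`. -/
theorem uStarPiece_properties (ω : ℕ) (hω : 3 ≤ ω) :
    ContDiff ℝ 1 (uStarPiece ω) ∧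
    Function.Periodic (uStarPiece ω) (2 * Real.pi) ∧
    (∀ θ : ℝ, θ ∉ gluingSet ω → ContDiffAt ℝ 2 (uStarPiece ω) θ ∧
      0 < deriv (deriv (uStarPiece ω)) θ + (ω : ℝ) ^ 2 * uStarPiece ω θ) ∧
    uStarPiece ω 0 < 0 ∧ uStarPiece ω (3 * Real.pi / ω) < 0 := by
  have hπ := Real.pi_pos
  have hω3 : (3:ℝ) ≤ ω := by exact_mod_cast hω
  have hω0 : (0:ℝ) < ω := by linarith
  have hωsq : (0:ℝ) < (ω:ℝ) ^ 2 := by positivity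
  refine ⟨?_, uStar_periodic, ?_, ?_, ?_⟩
  · exact contDiff_one_iff_deriv.mpr
      ⟨fun θ => (pack hω θ).1, continuous_iff_continuousAt.2 fun θ => (pack hω θ).2⟩
  · intro θ hθ
    obtain ⟨k, hcase⟩ := classify hω θ
    rcases hcase with h | ⟨h1, h2⟩ | ⟨h1, h2⟩ | h | h | h
    · obtain ⟨hcd, hd2, hval⟩ := region_part contDiff_fA (eq_fA_nhds hω k h)
      refine ⟨hcd, ?_⟩
      rw [hd2, hval, deriv2_fA, fA]
      nlinarith [Real.neg_one_le_cos ((ω:ℝ) * θ), Real.cos_le_one ((ω:ℝ) * θ)]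
    · obtain ⟨hcd, hd2, hval⟩ := region_part contDiff_const (eq_fB_nhds hω k h1 h2)
      refine ⟨hcd, ?_⟩
      rw [hd2, hval]
      simp only [deriv_const']
      nlinarith
    · obtain ⟨hcd, hd2, hval⟩ := region_part contDiff_fC (eq_fC_nhds hω k h1 h2)
      refine ⟨hcd, ?_⟩
      rw [hd2, hval, deriv2_fC, fC]
      nlinarith [Real.neg_one_le_cos ((ω:ℝ) * θ), Real.cos_le_one ((ω:ℝ) * θ)]
    · exact absurd ⟨k, Or.inl h⟩ hθ
    · exact absurd ⟨k, Or.inr (Or.inl h)⟩ hθ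
    · exact absurd ⟨k, Or.inr (Or.inr h)⟩ hθ
  · have h0 : uStarPiece ω 0 = 1 / 2 - Real.cos ((ω:ℝ) * 0) := by
      have := uval_all hω 0 (θ := 0) (by push_cast; linarith) (by push_cast; linarith)
      rw [this, if_pos]
      push_cast
      rw [show (0:ℝ) - 2 * Real.pi * 0 = 0 by ring, abs_zero]
      positivity
    rw [h0, mul_zero, Real.cos_zero]; norm_num
  · have ha0 : 0 < Real.pi / ω := by positivity
    have hb : 2 * Real.pi / ω < 3 * Real.pi / ω := by
      rw [div_lt_div_iff_of_pos_right hω0]; linarith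
    have hab : Real.pi / ω < 2 * Real.pi / ω := by
      rw [div_lt_div_iff_of_pos_right hω0]; linarith
    have h3π : 3 * Real.pi / ω ≤ Real.pi := by rw [div_le_iff₀ hω0]; nlinarith
    have habs : |3 * Real.pi / ω - 2 * Real.pi * ((0:ℤ):ℝ)| = 3 * Real.pi / ω := by
      push_cast; rw [mul_zero, sub_zero, abs_of_pos (by positivity)]
    have h0 : uStarPiece ω (3 * Real.pi / ω) = 1 / 2 + Real.cos ((ω:ℝ) * (3 * Real.pi / ω)) := by
      rw [uval_all hω 0 (by push_cast; linarith) (by push_cast; linarith), habs,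
        if_neg (by push_neg; linarith), if_neg (by push_neg; linarith)]
    have hcos : Real.cos ((ω:ℝ) * (3 * Real.pi / ω)) = -1 := by
      rw [show (ω:ℝ) * (3 * Real.pi / ω) = Real.pi + 2 * Real.pi by field_simp; ring,
        Real.cos_add_two_pi, Real.cos_pi]
    rw [h0, hcos]; norm_num
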